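/- Let Γ be a temporal theory over alphabet 𝒜 and let ⟨H,T⟩ be a THT_f model of Γ of length λ. Define the HT-trace ⟨H',T'⟩ over the extended alphabet 𝒜⁺ by H'_k = H_k ∪ { L_μ | μ ∈ subf(Γ), m[k,μ] = 2 } and T'_k = T_k ∪ { L_μ | μ ∈ subf(Γ), m[k,μ] ≠ 0 }, where m is the valuation associated with ⟨H,T⟩. Then ⟨H',T'⟩ restricted to 𝒜 equals ⟨H,T⟩, the valuation m' of ⟨H',T'⟩ satisfies m'[k,L_μ] = m[k,μ] for all μ ∈ subf(Γ) and 0 ≤ k < λ, and ⟨H',T'⟩ ⊨ σ(Γ). -/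

import Mathlib

/-- Syntax of temporal formulas over an alphabet of atoms `α`:
`⊥`, atoms, `∧`, `∨`, `→`, previous `●`, since `S`, trigger `T`,
next `○`, until `U`, release `R`. -/
inductive TForm (α : Type) : Type
  | bot   : TForm α
  | atom  : α → TForm α
  | conj  : TForm α → TForm α → TForm α
  | disj  : TForm α → TForm α → TForm α
  | impl  : TForm α → TForm α → TForm α
  | prev  : TForm α → TForm α
  | since : TForm α → TForm α → TForm α
  | trig  : TForm α → TForm α → TForm α
  | next  : TForm α → TForm α
  | untl  : TForm α → TForm α → TForm α
  | rels  : TForm α → TForm α → TForm α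

/-- THT_f satisfaction `⟨H,T⟩,k ⊨ φ` for finite traces of length `n`
(time points are `0 ≤ k < n`). -/
def sat {α : Type} (n : ℕ) : (ℕ → Set α) → (ℕ → Set α) → ℕ → TForm α → Prop
  | _, _, _, .bot => False
  | H, _, k, .atom a => a ∈ H k
  | H, T, k, .conj φ ψ => sat n H T k φ ∧ sat n H T k ψ
  | H, T, k, .disj φ ψ => sat n H T k φ ∨ sat n H T k ψ
  | H, T, k, .impl φ ψ =>
      (sat n H T k φ → sat n H T k ψ) ∧ (sat n T T k φ → sat n T T k ψ)
  | H, T, k, .prev φ => 0 < k ∧ sat n H T (k - 1) φ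
  | H, T, k, .since φ ψ =>
      ∃ j, j ≤ k ∧ sat n H T j ψ ∧ ∀ i, j < i → i ≤ k → sat n H T i φ
  | H, T, k, .trig φ ψ =>
      ∀ j, j ≤ k → sat n H T j ψ ∨ ∃ i, j < i ∧ i ≤ k ∧ sat n H T i φ
  | H, T, k, .next φ => k + 1 < n ∧ sat n H T (k + 1) φ
  | H, T, k, .untl φ ψ =>
      ∃ j, k ≤ j ∧ j < n ∧ sat n H T j ψ ∧ ∀ i, k ≤ i → i < j → sat n H T i φ
  | H, T, k, .rels φ ψ =>
      ∀ j, k ≤ j → j < n → sat n H T j ψ ∨ ∃ i, k ≤ i ∧ i < j ∧ sat n H T i φ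

open Classical in
/-- The three-valued valuation `m[k,φ] ∈ {0,1,2}` associated with an HT-trace
`⟨H,T⟩` of length `n` (an empty `Finset.inf` is `⊤ = 2`, an empty `Finset.sup` is `⊥ = 0`). -/
noncomputable def val {α : Type} (H T : ℕ → Set α) (n : ℕ) : ℕ → TForm α → Fin 3
  | _, .bot => 0
  | k, .atom a => if a ∈ H k then 2 else if a ∈ T k then 1 else 0
  | k, .conj φ ψ => min (val H T n k φ) (val H T n k ψ)
  | k, .disj φ ψ => max (val H T n k φ) (val H T n k ψ)
  | k, .impl φ ψ => if val H T n k φ ≤ val H T n k ψ then 2 else val H T n k ψ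
  | k, .prev φ => if k = 0 then 0 else val H T n (k - 1) φ
  | k, .since φ ψ =>
      (Finset.range (k + 1)).sup fun j =>
        min (val H T n j ψ) ((Finset.Ioc j k).inf fun i => val H T n i φ)
  | k, .trig φ ψ =>
      (Finset.range (k + 1)).inf fun j =>
        max (val H T n j ψ) ((Finset.Ioc j k).sup fun i => val H T n i φ)
  | k, .next φ => if k + 1 = n then 0 else val H T n (k + 1) φ
  | k, .untl φ ψ =>
      (Finset.Ico k n).sup fun j =>
        min (val H T n j ψ) ((Finset.Ico k j).inf fun i => val H T n i φ)
  | k, .rels φ ψ =>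
      (Finset.Ico k n).inf fun j =>
        max (val H T n j ψ) ((Finset.Ico k j).sup fun i => val H T n i φ)

/-- Renaming of atoms in a formula. -/
def TForm.map {α β : Type} (f : α → β) : TForm α → TForm β
  | .bot => .bot
  | .atom a => .atom (f a)
  | .conj φ ψ => .conj (φ.map f) (ψ.map f)
  | .disj φ ψ => .disj (φ.map f) (ψ.map f)
  | .impl φ ψ => .impl (φ.map f) (ψ.map f)
  | .prev φ => .prev (φ.map f)
  | .since φ ψ => .since (φ.map f) (ψ.map f)
  | .trig φ ψ => .trig (φ.map f) (ψ.map f)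
  | .next φ => .next (φ.map f)
  | .untl φ ψ => .untl (φ.map f) (ψ.map f)
  | .rels φ ψ => .rels (φ.map f) (ψ.map f)

/-- The set of subformulas of a formula (including the formula itself). -/
def subf {α : Type} : TForm α → Set (TForm α)
  | .bot => {.bot}
  | .atom a => {.atom a}
  | .conj φ ψ => insert (.conj φ ψ) (subf φ ∪ subf ψ)
  | .disj φ ψ => insert (.disj φ ψ) (subf φ ∪ subf ψ)
  | .impl φ ψ => insert (.impl φ ψ) (subf φ ∪ subf ψ)
  | .prev φ => insert (.prev φ) (subf φ)
  | .since φ ψ => insert (.since φ ψ) (subf φ ∪ subf ψ)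
  | .trig φ ψ => insert (.trig φ ψ) (subf φ ∪ subf ψ)
  | .next φ => insert (.next φ) (subf φ)
  | .untl φ ψ => insert (.untl φ ψ) (subf φ ∪ subf ψ)
  | .rels φ ψ => insert (.rels φ ψ) (subf φ ∪ subf ψ)

/-- The set of subformulas of the formulas of a theory `Γ`. -/
def subfTh {α : Type} (Γ : Set (TForm α)) : Set (TForm α) := ⋃ φ ∈ Γ, subf φ

/-- The extended alphabet `𝒜⁺`: original atoms (`Sum.inl`) plus a fresh
labelling atom `L_μ` (`Sum.inr μ`) for every formula `μ` over `𝒜`. -/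
abbrev ExtAlph (α : Type) := α ⊕ TForm α

/-- The label `L_μ` of a formula `μ`, as a formula over the extended alphabet:
`L_⊥ = ⊥`, `L_a = a` for atoms `a`, and a fresh atom `Sum.inr μ` otherwise. -/
def lab {α : Type} : TForm α → TForm (ExtAlph α)
  | .bot => .bot
  | .atom a => .atom (Sum.inl a)
  | μ => .atom (Sum.inr μ)

/-- Negation `¬φ := φ → ⊥`. -/
def tneg {β : Type} (φ : TForm β) : TForm β := .impl φ .bot

/-- Truth `⊤ := ¬⊥`. -/
def ttop {β : Type} : TForm β := tneg .bot

/-- Double implication `φ ↔ ψ`. -/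
def tiff {β : Type} (φ ψ : TForm β) : TForm β := .conj (.impl φ ψ) (.impl ψ φ)

/-- Always `□φ := ⊥ R φ`. -/
def talways {β : Type} (φ : TForm β) : TForm β := .rels .bot φ

/-- Weak next `○̂φ := ¬○⊤ ∨ ○φ`. -/
def twnext {β : Type} (φ : TForm β) : TForm β := .disj (tneg (.next ttop)) (.next φ)

/-- The definition `η(μ)` of the label `L_μ` of a formula `μ`. -/
def eta {α : Type} : TForm α → Set (TForm (ExtAlph α))
  | .bot => ∅
  | .atom _ => ∅
  | .conj φ ψ =>
      {talways (tiff (lab (.conj φ ψ)) (.conj (lab φ) (lab ψ)))}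
  | .disj φ ψ =>
      {talways (tiff (lab (.disj φ ψ)) (.disj (lab φ) (lab ψ)))}
  | .impl φ ψ =>
      {talways (tiff (lab (.impl φ ψ)) (.impl (lab φ) (lab ψ)))}
  | .prev φ =>
      {twnext (talways (tiff (lab (.prev φ)) (.prev (lab φ)))),
       tneg (lab (.prev φ))}
  | .since φ ψ =>
      {twnext (talways (tiff (lab (.since φ ψ))
          (.disj (lab ψ) (.conj (lab φ) (.prev (lab (.since φ ψ))))))),
       tiff (lab (.since φ ψ)) (lab ψ)}
  | .trig φ ψ =>
      {twnext (talways (tiff (lab (.trig φ ψ))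
          (.conj (lab ψ) (.disj (lab φ) (.prev (lab (.trig φ ψ))))))),
       tiff (lab (.trig φ ψ)) (lab ψ)}
  | .next φ =>
      {twnext (talways (tiff (.prev (lab (.next φ))) (lab φ))),
       talways (.impl (tneg (.next ttop)) (tneg (lab (.next φ))))}
  | .untl φ ψ =>
      {twnext (talways (tiff (.prev (lab (.untl φ ψ)))
          (.disj (.prev (lab ψ)) (.conj (.prev (lab φ)) (lab (.untl φ ψ)))))),
       talways (.impl (tneg (.next ttop)) (tiff (lab (.untl φ ψ)) (lab ψ)))}
  | .rels φ ψ =>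
      {twnext (talways (tiff (.prev (lab (.rels φ ψ)))
          (.conj (.prev (lab ψ)) (.disj (.prev (lab φ)) (lab (.rels φ ψ)))))),
       talways (.impl (tneg (.next ttop)) (tiff (lab (.rels φ ψ)) (lab ψ)))}

/-- The translation `σ(Γ) = {L_φ | φ ∈ Γ} ∪ ⋃ {η(μ) | μ ∈ subf(Γ)}`. -/
def sigmaT {α : Type} (Γ : Set (TForm α)) : Set (TForm (ExtAlph α)) :=
  (lab '' Γ) ∪ ⋃ μ ∈ subfTh Γ, eta μ

/-- Restriction of a trace over the extended alphabet to the original alphabet `𝒜`. -/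
def restrict {α : Type} (X : ℕ → Set (ExtAlph α)) : ℕ → Set α :=
  fun k => {a | Sum.inl a ∈ X k}

/-!
Read `m[k,φ] = 2` as "`φ` holds at `k` in `⟨H,T⟩`" and `m[k,φ] ≠ 0` as "`φ` holds at `k` in
`⟨T,T⟩`"; a single induction on `φ` shows both readings are exact. In `⟨H',T'⟩` each label `L_μ`
is an atom whose three-valued value is, by construction, `m[k,μ]`. Every formula of `η(μ)` then
becomes an identity between values of `m`: for the Boolean connectives this is the clause
defining `m`, and for the temporal operators it is the one-step unfolding of `S`, `T`, `U`, `R`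
(for instance `m[k+1, φ S ψ] = max m[k+1,ψ] (min m[k+1,φ] m[k, φ S ψ])`) together with the value
at the first or last time point.
-/

section Valuation

variable {α : Type} {n : ℕ} {H T : ℕ → Set α}

-- `c = 2` reads satisfaction in `⟨H,T⟩`, `c = 1` in `⟨T,T⟩`; they are proved together because
-- satisfaction of `→` in `⟨H,T⟩` refers to `⟨T,T⟩`.
theorem sat_iff_le_val (hHT : ∀ i < n, H i ⊆ T i) (φ : TForm α) :
    ∀ (X : ℕ → Set α) (c : Fin 3), X = H ∧ c = 2 ∨ X = T ∧ c = 1 →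
      ∀ k < n, (sat n X T k φ ↔ c ≤ val H T n k φ) := by
  induction φ <;> intro X c hXc k hk <;>
    have hc : 0 < c := by rcases hXc with ⟨-, rfl⟩ | ⟨-, rfl⟩ <;> decide
  case bot => simpa [sat, val] using hc.ne'
  case atom a =>
    rcases hXc with ⟨rfl, rfl⟩ | ⟨rfl, rfl⟩ <;> simp only [sat, val] <;> split_ifs <;>
      simp_all [hHT k hk _]
  case conj φ ψ ihφ ihψ => simp only [sat, val, le_min_iff, ihφ X c hXc k hk, ihψ X c hXc k hk]
  case disj φ ψ ihφ ihψ => simp only [sat, val, le_max_iff, ihφ X c hXc k hk, ihψ X c hXc k hk]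
  case impl φ ψ ihφ ihψ =>
    have hT : T = H ∧ (1 : Fin 3) = 2 ∨ T = T ∧ (1 : Fin 3) = 1 := .inr ⟨rfl, rfl⟩
    simp only [sat, val, ihφ X c hXc k hk, ihψ X c hXc k hk, ihφ T 1 hT k hk, ihψ T 1 hT k hk]
    generalize val H T n k φ = a, val H T n k ψ = b
    rcases hXc with ⟨-, rfl⟩ | ⟨-, rfl⟩ <;> revert a b <;> decide
  case prev φ ih =>
    rcases Nat.eq_zero_or_pos k with rfl | hk0
    · simpa [sat, val] using hc.ne'
    · simp only [sat, val, hk0, true_and, Nat.pos_iff_ne_zero.1 hk0, if_false,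
        ih X c hXc (k - 1) (by omega)]
  case next φ ih =>
    by_cases hlast : k + 1 = n
    · simpa [sat, val, hlast] using hc.ne'
    · simp only [sat, val, hlast, if_false, show k + 1 < n by omega, true_and,
        ih X c hXc (k + 1) (by omega)]
  case since φ ψ ihφ ihψ =>
    simp only [sat, val, Finset.le_sup_iff hc, le_min_iff, Finset.le_inf_iff, Finset.mem_range,
      Finset.mem_Ioc, Nat.lt_succ_iff, and_imp]
    exact exists_congr fun j => and_congr_right fun hj => and_congr (ihψ X c hXc j (by omega))
      (forall₃_congr fun i _ hi => ihφ X c hXc i (by omega))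
  case trig φ ψ ihφ ihψ =>
    simp only [sat, val, Finset.le_inf_iff, le_max_iff, Finset.le_sup_iff hc, Finset.mem_range,
      Finset.mem_Ioc, Nat.lt_succ_iff, and_assoc]
    exact forall₂_congr fun j hj => or_congr (ihψ X c hXc j (by omega))
      (exists_congr fun i => and_congr_right fun _ => and_congr_right fun hi =>
        ihφ X c hXc i (by omega))
  case untl φ ψ ihφ ihψ =>
    simp only [sat, val, Finset.le_sup_iff hc, le_min_iff, Finset.le_inf_iff, Finset.mem_Ico,
      and_imp, and_assoc]
    exact exists_congr fun j => and_congr_right fun _ => and_congr_right fun hj =>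
      and_congr (ihψ X c hXc j hj) (forall₃_congr fun i _ hi => ihφ X c hXc i (by omega))
  case rels φ ψ ihφ ihψ =>
    simp only [sat, val, Finset.le_inf_iff, le_max_iff, Finset.le_sup_iff hc, Finset.mem_Ico,
      and_imp, and_assoc]
    exact forall₃_congr fun j _ hj => or_congr (ihψ X c hXc j hj)
      (exists_congr fun i => and_congr_right fun _ => and_congr_right fun hi =>
        ihφ X c hXc i (by omega))

theorem sat_iff_val_eq_two (hHT : ∀ i < n, H i ⊆ T i) {k : ℕ} (hk : k < n) (φ : TForm α) :
    sat n H T k φ ↔ val H T n k φ = 2 := by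
  rw [sat_iff_le_val hHT φ H 2 (.inl ⟨rfl, rfl⟩) k hk]
  exact (by decide : ∀ v : Fin 3, 2 ≤ v ↔ v = 2) _

theorem val_since_succ (m : ℕ) (φ ψ : TForm α) :
    val H T n (m + 1) (.since φ ψ) =
      max (val H T n (m + 1) ψ) (min (val H T n (m + 1) φ) (val H T n m (.since φ ψ))) := by
  simp only [val]
  rw [Finset.range_add_one, Finset.sup_insert, Finset.Ioc_self, Finset.inf_empty, min_top_right,
    Finset.sup_inf_distrib_left]
  refine congrArg _ (Finset.sup_congr rfl fun j hj => ?_)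
  rw [← Finset.insert_Ioc_right_eq_Ioc_add_one (by simpa [Nat.lt_succ_iff] using hj),
    Finset.inf_insert, inf_left_comm]

theorem val_trig_succ (m : ℕ) (φ ψ : TForm α) :
    val H T n (m + 1) (.trig φ ψ) =
      min (val H T n (m + 1) ψ) (max (val H T n (m + 1) φ) (val H T n m (.trig φ ψ))) := by
  simp only [val]
  rw [Finset.range_add_one, Finset.inf_insert, Finset.Ioc_self, Finset.sup_empty, max_bot_right,
    Finset.inf_sup_distrib_left]
  refine congrArg _ (Finset.inf_congr rfl fun j hj => ?_)
  rw [← Finset.insert_Ioc_right_eq_Ioc_add_one (by simpa [Nat.lt_succ_iff] using hj),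
    Finset.sup_insert, sup_left_comm]

theorem val_untl_of_lt {k : ℕ} (hk : k < n) (φ ψ : TForm α) :
    val H T n k (.untl φ ψ) =
      max (val H T n k ψ) (min (val H T n k φ) (val H T n (k + 1) (.untl φ ψ))) := by
  simp only [val]
  rw [← Finset.insert_Ico_add_one_left_eq_Ico hk, Finset.sup_insert, Finset.Ico_self,
    Finset.inf_empty, min_top_right, Finset.sup_inf_distrib_left]
  refine congrArg _ (Finset.sup_congr rfl fun j hj => ?_)
  rw [← Finset.insert_Ico_add_one_left_eq_Ico (by simp at hj; omega), Finset.inf_insert,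
    inf_left_comm]

theorem val_rels_of_lt {k : ℕ} (hk : k < n) (φ ψ : TForm α) :
    val H T n k (.rels φ ψ) =
      min (val H T n k ψ) (max (val H T n k φ) (val H T n (k + 1) (.rels φ ψ))) := by
  simp only [val]
  rw [← Finset.insert_Ico_add_one_left_eq_Ico hk, Finset.inf_insert, Finset.Ico_self,
    Finset.sup_empty, max_bot_right, Finset.inf_sup_distrib_left]
  refine congrArg _ (Finset.inf_congr rfl fun j hj => ?_)
  rw [← Finset.insert_Ico_add_one_left_eq_Ico (by simp at hj; omega), Finset.sup_insert,
    sup_left_comm]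

theorem val_untl_of_succ_eq {k : ℕ} (hk : k + 1 = n) (φ ψ : TForm α) :
    val H T n k (.untl φ ψ) = val H T n k ψ := by
  simp [val, ← hk]

theorem val_rels_of_succ_eq {k : ℕ} (hk : k + 1 = n) (φ ψ : TForm α) :
    val H T n k (.rels φ ψ) = val H T n k ψ := by
  simp [val, ← hk]

end Valuation

section Connectives

variable {β : Type} {n k : ℕ} {H T : ℕ → Set β}

theorem val_impl_eq_two_iff (A B : TForm β) :
    val H T n k (.impl A B) = 2 ↔ val H T n k A ≤ val H T n k B := by
  simp only [val]
  grind

theorem val_tneg_eq_two_iff (A : TForm β) : val H T n k (tneg A) = 2 ↔ val H T n k A = 0 := by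
  simp only [tneg, val]
  grind

theorem val_tiff_eq_two_iff (A B : TForm β) :
    val H T n k (tiff A B) = 2 ↔ val H T n k A = val H T n k B := by
  simp only [tiff, val]
  grind

theorem val_tneg_next_ttop :
    val H T n k (tneg (.next ttop)) = if k + 1 = n then 2 else 0 := by
  simp only [tneg, ttop, val]
  grind

theorem val_prev_succ (A : TForm β) : val H T n (k + 1) (.prev A) = val H T n k A := by
  simp [val]

theorem sat_talways_iff (ξ : TForm β) :
    sat n H T k (talways ξ) ↔ ∀ j, k ≤ j → j < n → sat n H T j ξ := by
  simp [talways, sat]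

theorem sat_twnext_iff (ξ : TForm β) :
    sat n H T k (twnext ξ) ↔ (k + 1 < n → sat n H T (k + 1) ξ) := by
  simp only [twnext, tneg, ttop, sat]
  tauto

variable (hHT : ∀ i < n, H i ⊆ T i)
include hHT

theorem sat_talways_tiff_iff (A B : TForm β) :
    sat n H T 0 (talways (tiff A B)) ↔ ∀ j < n, val H T n j A = val H T n j B := by
  simp only [sat_talways_iff, zero_le, true_implies]
  exact forall₂_congr fun j hj => by rw [sat_iff_val_eq_two hHT hj, val_tiff_eq_two_iff]

theorem sat_twnext_talways_tiff_iff (A B : TForm β) :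
    sat n H T 0 (twnext (talways (tiff A B))) ↔
      ∀ m, m + 1 < n → val H T n (m + 1) A = val H T n (m + 1) B := by
  simp only [sat_twnext_iff, sat_talways_iff]
  refine ⟨fun h m hm => ?_, fun h _ j hj0 hj => ?_⟩
  · rw [← val_tiff_eq_two_iff, ← sat_iff_val_eq_two hHT hm]
    exact h (by omega) _ (by omega) hm
  · obtain ⟨m, rfl⟩ : ∃ m, j = m + 1 := ⟨j - 1, by omega⟩
    rw [sat_iff_val_eq_two hHT hj, val_tiff_eq_two_iff]
    exact h m hj

theorem sat_talways_impl_last_iff (hn : 0 < n) (A : TForm β) :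
    sat n H T 0 (talways (.impl (tneg (.next ttop)) A)) ↔ val H T n (n - 1) A = 2 := by
  have hsat : ∀ j < n,
      sat n H T j (.impl (tneg (.next ttop)) A) ↔ (j + 1 = n → val H T n j A = 2) := by
    intro j hj
    rw [sat_iff_val_eq_two hHT hj, val_impl_eq_two_iff, val_tneg_next_ttop]
    grind
  simp only [sat_talways_iff, zero_le, true_implies]
  refine ⟨fun h => (hsat _ (by omega)).1 (h _ (by omega)) (by omega), fun h j hj => ?_⟩
  refine (hsat j hj).2 fun hjn => ?_
  rwa [show j = n - 1 by omega]

end Connectives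

section Subformulas

variable {α : Type}

@[simp]
theorem mem_subf_self (φ : TForm α) : φ ∈ subf φ := by
  cases φ <;> simp [subf]

theorem subf_subset_of_mem {μ ν : TForm α} (h : ν ∈ subf μ) : subf ν ⊆ subf μ := by
  induction μ with
  | bot | atom => simp only [subf, Set.mem_singleton_iff] at h; rw [h]
  | prev φ ih | next φ ih =>
    simp only [subf, Set.mem_insert_iff] at h ⊢
    rcases h with rfl | h
    · rfl
    · exact (ih h).trans (Set.subset_insert _ _)
  | _ φ ψ ihφ ihψ =>
    simp only [subf, Set.mem_insert_iff, Set.mem_union] at h ⊢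
    rcases h with rfl | h | h
    · rfl
    · exact (ihφ h).trans (Set.subset_union_left.trans (Set.subset_insert _ _))
    · exact (ihψ h).trans (Set.subset_union_right.trans (Set.subset_insert _ _))

theorem mem_subfTh_of_mem_subf {Γ : Set (TForm α)} {μ ν : TForm α} (hμ : μ ∈ subfTh Γ)
    (hν : ν ∈ subf μ) : ν ∈ subfTh Γ := by
  simp only [subfTh, Set.mem_iUnion₂] at hμ ⊢
  obtain ⟨γ, hγ, hμγ⟩ := hμ
  exact ⟨γ, hγ, subf_subset_of_mem hμγ hν⟩

end Subformulas

section Labels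

variable {α : Type}

theorem lab_cases (μ : TForm α) : μ = .bot ∨ (∃ a, μ = .atom a) ∨ lab μ = .atom (.inr μ) := by
  cases μ <;> simp [lab]

theorem eq_atom_of_lab_eq_inl {μ : TForm α} {a : α} (h : lab μ = .atom (.inl a)) :
    μ = .atom a := by
  cases μ <;> simp_all [lab]

theorem eq_of_lab_eq_inr {μ ν : TForm α} (h : lab μ = .atom (.inr ν)) : μ = ν := by
  cases μ <;> simp_all [lab]

def labelExtension (S : Set (TForm α)) (X : Set α) (p : TForm α → Prop) : Set (ExtAlph α) :=
  Sum.inl '' X ∪ {x | ∃ μ ∈ S, lab μ = .atom x ∧ p μ}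

variable {S : Set (TForm α)} {X Y : Set α} {p q : TForm α → Prop}

theorem labelExtension_mono (hXY : X ⊆ Y) (hpq : ∀ μ, p μ → q μ) :
    labelExtension S X p ⊆ labelExtension S Y q :=
  Set.union_subset_union (Set.image_mono hXY) fun _ ⟨μ, hμ, hl, hp⟩ => ⟨μ, hμ, hl, hpq μ hp⟩

theorem inl_mem_labelExtension_iff (hp : ∀ a, p (.atom a) → a ∈ X) (a : α) :
    Sum.inl a ∈ labelExtension S X p ↔ a ∈ X := by
  refine ⟨?_, fun ha => .inl ⟨a, ha, rfl⟩⟩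
  rintro (⟨b, hb, hba⟩ | ⟨μ, -, hl, hμ⟩)
  · rwa [← Sum.inl_injective hba]
  · exact hp a (eq_atom_of_lab_eq_inl hl ▸ hμ)

theorem inr_mem_labelExtension_iff {μ : TForm α} (hμ : μ ∈ S) (hl : lab μ = .atom (.inr μ)) :
    Sum.inr μ ∈ labelExtension S X p ↔ p μ := by
  refine ⟨?_, fun h => .inr ⟨μ, hμ, hl, h⟩⟩
  rintro (⟨b, -, hb⟩ | ⟨ν, -, hl', hν⟩)
  · exact absurd hb Sum.inl_ne_inr
  · rwa [← eq_of_lab_eq_inr hl']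

end Labels

section LabelledTrace

variable {α : Type} {n k : ℕ} {S : Set (TForm α)} {H T : ℕ → Set α}
  {H' T' : ℕ → Set (ExtAlph α)}

theorem val_atom_eq_two_iff (a : α) : val H T n k (.atom a) = 2 ↔ a ∈ H k := by
  simp only [val]
  split_ifs <;> simp_all

theorem val_atom_ne_zero_iff (hk : H k ⊆ T k) (a : α) :
    val H T n k (.atom a) ≠ 0 ↔ a ∈ T k := by
  simp only [val]
  split_ifs with hH hT
  · simp [hk hH]
  · simp [hT]
  · simp [hT]

theorem inl_mem_here_iff
    (hH' : ∀ k, H' k = labelExtension S (H k) fun μ => val H T n k μ = 2) (k : ℕ) (a : α) :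
    Sum.inl a ∈ H' k ↔ a ∈ H k :=
  hH' k ▸ inl_mem_labelExtension_iff (fun a => (val_atom_eq_two_iff a).1) a

theorem inl_mem_there_iff
    (hT' : ∀ k, T' k = labelExtension S (T k) fun μ => val H T n k μ ≠ 0) (hk : H k ⊆ T k)
    (a : α) : Sum.inl a ∈ T' k ↔ a ∈ T k :=
  hT' k ▸ inl_mem_labelExtension_iff (fun a => (val_atom_ne_zero_iff hk a).1) a

theorem labelExtension_here_subset_there
    (hH' : ∀ k, H' k = labelExtension S (H k) fun μ => val H T n k μ = 2)
    (hT' : ∀ k, T' k = labelExtension S (T k) fun μ => val H T n k μ ≠ 0) (hk : H k ⊆ T k) :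
    H' k ⊆ T' k := by
  rw [hH', hT']
  exact labelExtension_mono hk fun _ h => h ▸ (by decide)

theorem val_lab_labelExtension
    (hH' : ∀ k, H' k = labelExtension S (H k) fun μ => val H T n k μ = 2)
    (hT' : ∀ k, T' k = labelExtension S (T k) fun μ => val H T n k μ ≠ 0) (hk : H k ⊆ T k)
    {μ : TForm α} (hμ : μ ∈ S) : val H' T' n k (lab μ) = val H T n k μ := by
  rcases lab_cases μ with rfl | ⟨a, rfl⟩ | hl
  · rfl
  · have hHa := inl_mem_here_iff hH' k a
    have hTa := inl_mem_there_iff hT' hk a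
    simp only [lab, val]
    grind
  · simp only [hl, val, hH', hT', inr_mem_labelExtension_iff hμ hl]
    grind

end LabelledTrace

section DefiningFormulas

variable {α : Type} {n : ℕ} {H T : ℕ → Set α} {H' T' : ℕ → Set (ExtAlph α)}

theorem sat_eta (hn : 0 < n) (hHT' : ∀ i < n, H' i ⊆ T' i) {μ : TForm α}
    (hlab : ∀ ν ∈ subf μ, ∀ k < n, val H' T' n k (lab ν) = val H T n k ν) :
    ∀ δ ∈ eta μ, sat n H' T' 0 δ := by
  have hμ := hlab μ (mem_subf_self μ)
  have hlast : n - 1 + 1 = n := Nat.sub_add_cancel hn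
  cases μ <;> simp only [eta, Set.mem_insert_iff, Set.mem_singleton_iff, forall_eq_or_imp,
    forall_eq, Set.mem_empty_iff_false, IsEmpty.forall_iff, implies_true]
  case conj φ ψ | disj φ ψ | impl φ ψ =>
    rw [sat_talways_tiff_iff hHT']
    intro j hj
    simp only [hμ j hj, val, hlab φ (by simp [subf]) j hj, hlab ψ (by simp [subf]) j hj]
  case prev φ =>
    refine ⟨(sat_twnext_talways_tiff_iff hHT' _ _).2 fun m hm => ?_, ?_⟩
    · rw [hμ _ hm, val_prev_succ, val_prev_succ, hlab φ (by simp [subf]) m (by omega)]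
    · rw [sat_iff_val_eq_two hHT' hn, val_tneg_eq_two_iff, hμ 0 hn]
      simp [val]
  case since φ ψ | trig φ ψ =>
    have hφ := hlab φ (by simp [subf])
    have hψ := hlab ψ (by simp [subf])
    refine ⟨(sat_twnext_talways_tiff_iff hHT' _ _).2 fun m hm => ?_, ?_⟩
    · rw [hμ _ hm]
      simp only [val_since_succ, val_trig_succ]
      rw [← hφ _ hm, ← hψ _ hm, ← hμ m (by omega)]
      simp [val]
    · rw [sat_iff_val_eq_two hHT' hn, val_tiff_eq_two_iff, hμ 0 hn, hψ 0 hn]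
      simp [val]
  case next φ =>
    refine ⟨(sat_twnext_talways_tiff_iff hHT' _ _).2 fun m hm => ?_, ?_⟩
    · rw [val_prev_succ, hμ m (by omega), hlab φ (by simp [subf]) _ hm]
      simp [val, hm.ne]
    · rw [sat_talways_impl_last_iff hHT' hn, val_tneg_eq_two_iff, hμ _ (by omega)]
      simp [val, hlast]
  case untl φ ψ | rels φ ψ =>
    have hφ := hlab φ (by simp [subf])
    have hψ := hlab ψ (by simp [subf])
    refine ⟨(sat_twnext_talways_tiff_iff hHT' _ _).2 fun m hm => ?_, ?_⟩
    · rw [val_prev_succ, hμ m (by omega)]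
      simp only [val_untl_of_lt (show m < n by omega), val_rels_of_lt (show m < n by omega)]
      rw [← hφ m (by omega), ← hψ m (by omega), ← hμ _ hm]
      simp [val]
    · rw [sat_talways_impl_last_iff hHT' hn, val_tiff_eq_two_iff, hμ _ (by omega),
        hψ _ (by omega)]
      simp only [val_untl_of_succ_eq hlast, val_rels_of_succ_eq hlast]

end DefiningFormulas

/-- Lemma nf1: Let `⟨H,T⟩` be a THT_f model of length `n` of a
temporal theory `Γ` over `α`, with associated valuation `m = val H T n`.
Define `H'_k = H_k ∪ {L_μ | μ ∈ subf(Γ), m[k,μ] = 2}` and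
`T'_k = T_k ∪ {L_μ | μ ∈ subf(Γ), m[k,μ] ≠ 0}` over the extended alphabet.
Then `⟨H',T'⟩|_𝒜 = ⟨H,T⟩`, `⟨H',T'⟩` is an HT-trace, its valuation `m'`
satisfies `m'[k,L_μ] = m[k,μ]` for all `μ ∈ subf(Γ)` and `k < n`, and
`⟨H',T'⟩ ⊨ σ(Γ)`. -/
theorem nf1 {α : Type} (Γ : Set (TForm α)) (H T : ℕ → Set α) (n : ℕ)
    (hlen : 0 < n) (hHT : ∀ i, i < n → H i ⊆ T i)
    (hmod : ∀ φ ∈ Γ, sat n H T 0 φ)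
    (H' T' : ℕ → Set (ExtAlph α))
    (hH' : ∀ k, H' k = (Sum.inl '' H k) ∪
        {x | ∃ μ ∈ subfTh Γ, lab μ = TForm.atom x ∧ val H T n k μ = 2})
    (hT' : ∀ k, T' k = (Sum.inl '' T k) ∪
        {x | ∃ μ ∈ subfTh Γ, lab μ = TForm.atom x ∧ val H T n k μ ≠ 0}) :
    (∀ k, k < n → restrict H' k = H k ∧ restrict T' k = T k) ∧
    (∀ i, i < n → H' i ⊆ T' i) ∧
    (∀ μ ∈ subfTh Γ, ∀ k, k < n → val H' T' n k (lab μ) = val H T n k μ) ∧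
    (∀ δ ∈ sigmaT Γ, sat n H' T' 0 δ) := by
  have hHT' : ∀ i < n, H' i ⊆ T' i := fun i hi =>
    labelExtension_here_subset_there hH' hT' (hHT i hi)
  have hlab : ∀ μ ∈ subfTh Γ, ∀ k < n, val H' T' n k (lab μ) = val H T n k μ :=
    fun μ hμ k hk => val_lab_labelExtension hH' hT' (hHT k hk) hμ
  refine ⟨fun k hk => ⟨Set.ext (inl_mem_here_iff hH' k),
    Set.ext (inl_mem_there_iff hT' (hHT k hk))⟩, hHT', hlab, ?_⟩
  rintro δ (⟨φ, hφ, rfl⟩ | hδ)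
  · rw [sat_iff_val_eq_two hHT' hlen, hlab φ (Set.mem_biUnion hφ (mem_subf_self φ)) 0 hlen,
      ← sat_iff_val_eq_two hHT hlen]
    exact hmod φ hφ
  · obtain ⟨μ, hμ, hδ⟩ := Set.mem_iUnion₂.1 hδ
    exact sat_eta hlen hHT' (fun ν hν => hlab ν (mem_subfTh_of_mem_subf hμ hν)) δ hδ
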